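/- arXiv:2406.03825 — 2 statements merged into one kernel-verified Lean document; each statement's English description precedes it below -/
import Mathlib

section
/- For all real u, |cos((1-i)u)|² > (1/4)·cosh(2u). -/
open Complex

/-!
Since `cosh² = 1 + sinh²`, `|cos(x + iy)|² = cos² x + sinh² y`, so the claim reads
`cos² u + sinh² u / 2 > 1/4`. The left side is at least `1/2`: averaging `cos² u ≥ 0` with
`cos² u ≥ 1 - u²` gives `2 cos² u ≥ 1 - u²`, and `sinh² u ≥ u²`.
-/

theorem Complex.sq_norm_cos (z : ℂ) :
    ‖cos z‖ ^ 2 = Real.cos z.re ^ 2 + Real.sinh z.im ^ 2 := by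
  have hcos : cos z = (Real.cos z.re * Real.cosh z.im : ℝ)
      + (-(Real.sin z.re * Real.sinh z.im) : ℝ) * I := by
    rw [cos_eq]; push_cast; ring
  rw [hcos, Complex.sq_norm, normSq_add_mul_I]
  linear_combination Real.cos z.re ^ 2 * Real.cosh_sq' z.im
    + Real.sinh z.im ^ 2 * Real.sin_sq_add_cos_sq z.re

theorem Real.sq_le_sinh_sq (x : ℝ) : x ^ 2 ≤ Real.sinh x ^ 2 := by
  rw [sq_le_sq, Real.abs_sinh]
  exact Real.self_le_sinh_iff.mpr (abs_nonneg x)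

theorem Real.one_sub_sq_le_two_mul_cos_sq (x : ℝ) : 1 - x ^ 2 ≤ 2 * Real.cos x ^ 2 := by
  have hcos2 : 1 - (2 * x) ^ 2 / 2 ≤ Real.cos (2 * x) := Real.one_sub_sq_div_two_le_cos
  have hhalf := Real.cos_sq x
  linarith [sq_nonneg (Real.cos x)]

/-- For all real `u`, `|cos((1-i)u)|² > (1/4)·cosh(2u)`. -/
theorem stmt_2 (u : ℝ) :
    ‖Complex.cos ((1 - Complex.I) * u)‖^2 > 1/4 * Real.cosh (2 * u) := by
  have hre : ((1 - I) * u).re = u := by simp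
  have him : ((1 - I) * u).im = -u := by simp
  rw [sq_norm_cos, hre, him, Real.sinh_neg, neg_sq, Real.cosh_two_mul, Real.cosh_sq]
  linarith [Real.one_sub_sq_le_two_mul_cos_sq u, Real.sq_le_sinh_sq u]
end

section
/- For φ real with π/4 ≤ φ ≤ arctan(10) and |η| ≥ 52, one has π|η|(sin φ − 2|η| sin²φ cos²φ) < −0.076876·|η|. -/
open Real

lemma key_17 (s : ℝ) (h0 : 0 ≤ s) (hl : 1/2 ≤ s^2) (hu : s^2 ≤ 100/101) :
    π * (s - 104 * s^2 * (1 - s^2)) < -0.076876 := by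
  have hπ : 3.141592 < π := pi_gt_d6
  have hsb : s ≤ 0.9950372 := by nlinarith
  have hq : 100/10201 ≤ s^2 * (1 - s^2) := by nlinarith [mul_nonneg (by nlinarith : (0:ℝ) ≤ 100/101 - s^2) (by nlinarith : (0:ℝ) ≤ s^2 - 1/101)]
  have hg : s - 104 * s^2 * (1 - s^2) ≤ -0.0244706 := by nlinarith
  nlinarith [mul_lt_mul_of_pos_left hπ (show (0:ℝ) < 0.0244706 by norm_num)]

/-- For `π/4 ≤ φ ≤ arctan 10` and `r ≥ 52`,
`π·r·(sin φ − 2·r·sin²φ·cos²φ) < −0.076876·r`. -/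
theorem stmt_17 (φ r : ℝ) (h1 : π/4 ≤ φ) (h2 : φ ≤ arctan 10) (hr : r ≥ 52) :
    π * r * (sin φ - 2 * r * (sin φ)^2 * (cos φ)^2) < -0.076876 * r := by
  have hπ : 0 < π := pi_pos
  have hat : arctan 10 < π/2 := arctan_lt_pi_div_two 10
  have hs1 : sin (π/4) ≤ sin φ :=
    sin_le_sin_of_le_of_le_pi_div_two (by linarith [pi_pos]) (by linarith) h1
  have hs2 : sin φ ≤ sin (arctan 10) :=
    sin_le_sin_of_le_of_le_pi_div_two (by linarith [pi_pos]) hat.le h2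
  rw [sin_pi_div_four] at hs1
  rw [sin_arctan] at hs2
  have h2pos : (0:ℝ) < √2 := by positivity
  have h2sq : (√2)^2 = 2 := sq_sqrt (by norm_num)
  have hs0 : 0 ≤ sin φ := le_trans (by positivity) hs1
  have hl : 1/2 ≤ (sin φ)^2 := by nlinarith
  have h101 : (√(1 + (10:ℝ)^2))^2 = 101 := by rw [sq_sqrt] <;> norm_num
  have h101pos : (0:ℝ) < √(1 + (10:ℝ)^2) := by positivity
  have hu : (sin φ)^2 ≤ 100/101 := by
    have : sin φ * √(1 + (10:ℝ)^2) ≤ 10 := by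
      rw [le_div_iff₀ h101pos] at hs2
      exact hs2
    nlinarith
  have hc : (cos φ)^2 = 1 - (sin φ)^2 := by nlinarith [sin_sq_add_cos_sq φ]
  have hkey := key_17 (sin φ) hs0 hl hu
  have hr0 : (0:ℝ) < r := by linarith
  have hsc : (0:ℝ) ≤ (sin φ)^2 * (cos φ)^2 := by positivity
  have hmono : sin φ - 2 * r * (sin φ)^2 * (cos φ)^2 ≤ sin φ - 104 * (sin φ)^2 * (1 - (sin φ)^2) := by
    rw [← hc]; nlinarith
  nlinarith [mul_le_mul_of_nonneg_left hmono (le_of_lt hπ),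
    mul_lt_mul_of_pos_right hkey hr0]
end
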